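/- Let k ≥ 1 be an integer, let K = (a₁,a₂) × (b₁,b₂) be a rectangle with a₁ < a₂ and b₁ < b₂, and let z be a continuous real-valued function on the closure of K. Then there exists a unique polynomial P(x,y) of degree at most k in each variable such that: (i) ∬_K P v dx dy = ∬_K z v dx dy for every polynomial v of degree at most k−1 in each variable; (ii) ∫_{b₁}^{b₂} P(a₂,y) v(y) dy = ∫_{b₁}^{b₂} z(a₂,y) v(y) dy for every single-variable polynomial v of degree at most k−1; (iii) ∫_{a₁}^{a₂} P(x,b₂) v(x) dx = ∫_{a₁}^{a₂} z(x,b₂) v(x) dx for every single-variable polynomial v of degree at most k−1; and (iv) P(a₂,b₂) = z(a₂,b₂). (This is the well-definedness of the two-dimensional local Gauss–Radau projection Π⁻.) -/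

import Mathlib

open MeasureTheory

noncomputable section

/-- Mixed partial derivative `∂_x^i ∂_y^j f`. -/
def pd (i j : ℕ) (f : ℝ → ℝ → ℝ) (x y : ℝ) : ℝ :=
  iteratedDeriv i (fun x' => iteratedDeriv j (fun y' => f x' y') y) x

/-- `f` is a real polynomial of degree at most `m` in the first variable
and at most `n` in the second variable. -/
def Poly2 (m n : ℕ) (f : ℝ → ℝ → ℝ) : Prop :=
  ∃ c : Fin (m + 1) → Fin (n + 1) → ℝ,
    ∀ x y : ℝ, f x y = ∑ p : Fin (m + 1), ∑ q : Fin (n + 1), c p q * x ^ (p : ℕ) * y ^ (q : ℕ)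

/-- `f` is a real polynomial of degree at most `m`. -/
def Poly1 (m : ℕ) (f : ℝ → ℝ) : Prop :=
  ∃ c : Fin (m + 1) → ℝ, ∀ x : ℝ, f x = ∑ p : Fin (m + 1), c p * x ^ (p : ℕ)

/-- Shishkin mesh transition parameter `τ₁ = (σ ε / α) ln N`. -/
def Tau1 (σ ε α : ℝ) (N : ℕ) : ℝ := σ * ε / α * Real.log N

/-- Shishkin mesh transition parameter `τ₂ = (σ √ε / δ) ln N`. -/
def Tau2 (σ ε δ : ℝ) (N : ℕ) : ℝ := σ * Real.sqrt ε / δ * Real.log N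

/-- Shishkin mesh points in the x-direction. -/
def xpt (σ ε α : ℝ) (N i : ℕ) : ℝ :=
  if i ≤ N / 2 then 2 * (1 - Tau1 σ ε α N) * (i : ℝ) / N
  else 1 - 2 * Tau1 σ ε α N * (1 - (i : ℝ) / N)

/-- Shishkin mesh points in the y-direction. -/
def ypt (σ ε δ : ℝ) (N j : ℕ) : ℝ :=
  if j ≤ N / 4 then 4 * Tau2 σ ε δ N * (j : ℝ) / N
  else if j ≤ 3 * N / 4 then Tau2 σ ε δ N + 2 * (1 - 2 * Tau2 σ ε δ N) * ((j : ℝ) / N - 1 / 4)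
  else 1 - 4 * Tau2 σ ε δ N * (1 - (j : ℝ) / N)

/-- The solution decomposition `u = u₀ + u₁ + u₂ + u₁₂` into a smooth part, an exponential
layer, characteristic layers and corner layers, with the associated derivative bounds
up to total order `k + 2` (Assumption 2.1 of the paper, with `m = k`). -/
def ShishkinDecomp (k : ℕ) (C₀ ε α δ : ℝ) (u : ℝ → ℝ → ℝ) : Prop :=
  ContDiff ℝ ((k : ℕ∞) + 2) (fun p : ℝ × ℝ => u p.1 p.2) ∧
  ∃ u0 u1 u2 u12 : ℝ → ℝ → ℝ,
    (∀ x y : ℝ, u x y = u0 x y + u1 x y + u2 x y + u12 x y) ∧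
    ∀ i j : ℕ, i + j ≤ k + 2 → ∀ x ∈ Set.Icc (0:ℝ) 1, ∀ y ∈ Set.Icc (0:ℝ) 1,
      |pd i j u0 x y| ≤ C₀ ∧
      |pd i j u1 x y| ≤ C₀ * ε ^ (-(i : ℝ)) * Real.exp (-(α * (1 - x) / ε)) ∧
      |pd i j u2 x y| ≤ C₀ * ε ^ (-((j : ℝ) / 2)) *
        (Real.exp (-(δ * y / Real.sqrt ε)) + Real.exp (-(δ * (1 - y) / Real.sqrt ε))) ∧
      |pd i j u12 x y| ≤ C₀ * ε ^ (-((i : ℝ) + (j : ℝ) / 2)) * Real.exp (-(α * (1 - x) / ε)) *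
        (Real.exp (-(δ * y / Real.sqrt ε)) + Real.exp (-(δ * (1 - y) / Real.sqrt ε)))

/-- `P` is the local Gauss–Radau projection `Π⁻ z` on the rectangle `(x0,x1) × (y0,y1)`. -/
def GRm (k : ℕ) (x0 x1 y0 y1 : ℝ) (z P : ℝ → ℝ → ℝ) : Prop :=
  Poly2 k k P ∧
  (∀ v : ℝ → ℝ → ℝ, Poly2 (k - 1) (k - 1) v →
      (∫ x in x0..x1, ∫ y in y0..y1, P x y * v x y) =
        ∫ x in x0..x1, ∫ y in y0..y1, z x y * v x y) ∧
  (∀ v : ℝ → ℝ, Poly1 (k - 1) v →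
      (∫ y in y0..y1, P x1 y * v y) = ∫ y in y0..y1, z x1 y * v y) ∧
  (∀ v : ℝ → ℝ, Poly1 (k - 1) v →
      (∫ x in x0..x1, P x y1 * v x) = ∫ x in x0..x1, z x y1 * v x) ∧
  P x1 y1 = z x1 y1

/-- `P` is the local Gauss–Radau projection `Π_x⁺ z` on the rectangle `(x0,x1) × (y0,y1)`. -/
def GRxp (k : ℕ) (x0 x1 y0 y1 : ℝ) (z P : ℝ → ℝ → ℝ) : Prop :=
  Poly2 k k P ∧
  (∀ v : ℝ → ℝ → ℝ, Poly2 (k - 1) k v →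
      (∫ x in x0..x1, ∫ y in y0..y1, P x y * v x y) =
        ∫ x in x0..x1, ∫ y in y0..y1, z x y * v x y) ∧
  (∀ v : ℝ → ℝ, Poly1 k v →
      (∫ y in y0..y1, P x0 y * v y) = ∫ y in y0..y1, z x0 y * v y)

/-- `P` is the local Gauss–Radau projection `Π_y⁺ z` on the rectangle `(x0,x1) × (y0,y1)`. -/
def GRyp (k : ℕ) (x0 x1 y0 y1 : ℝ) (z P : ℝ → ℝ → ℝ) : Prop :=
  Poly2 k k P ∧
  (∀ v : ℝ → ℝ → ℝ, Poly2 k (k - 1) v →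
      (∫ x in x0..x1, ∫ y in y0..y1, P x y * v x y) =
        ∫ x in x0..x1, ∫ y in y0..y1, z x y * v x y) ∧
  (∀ v : ℝ → ℝ, Poly1 k v →
      (∫ x in x0..x1, P x y0 * v x) = ∫ x in x0..x1, z x y0 * v x)

/-- Squared `L²` norm over the rectangle `(x0,x1) × (y0,y1)`. -/
def elemL2sq (x0 x1 y0 y1 : ℝ) (f : ℝ → ℝ → ℝ) : ℝ :=
  ∫ x in x0..x1, ∫ y in y0..y1, (f x y) ^ 2

/-- Elementwise sum of double integrals over all mesh elements `K_{ij}`: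
the `L²(Ω)` inner-product-type quantity `Σ_{i,j} ∫∫_{K_{ij}} F_{ij}`. -/
def ip2 (N : ℕ) (xp yp : ℕ → ℝ) (F : ℕ → ℕ → ℝ → ℝ → ℝ) : ℝ :=
  ∑ i ∈ Finset.Icc 1 N, ∑ j ∈ Finset.Icc 1 N,
    ∫ x in xp (i - 1)..xp i, ∫ y in yp (j - 1)..yp j, F i j x y

/-- Jump `[v]_{i,y} = v⁺_{i,y} - v⁻_{i,y}` of a piecewise function (given by its element
polynomials `v i j` on `K_{ij}`) across the vertical mesh line `x = x_i`, with the
conventions `v⁻_{0,y} = 0` and `v⁺_{N,y} = 0`. -/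
def jmpX (N : ℕ) (xp : ℕ → ℝ) (v : ℕ → ℕ → ℝ → ℝ → ℝ) (i j : ℕ) (y : ℝ) : ℝ :=
  (if i < N then v (i + 1) j (xp i) y else 0) - (if 0 < i then v i j (xp i) y else 0)

/-- Jump `[v]_{x,j}` across the horizontal mesh line `y = y_j`, with the conventions
`v⁻_{x,0} = 0` and `v⁺_{x,N} = 0`. -/
def jmpY (N : ℕ) (yp : ℕ → ℝ) (v : ℕ → ℕ → ℝ → ℝ → ℝ) (i j : ℕ) (x : ℝ) : ℝ :=
  (if j < N then v i (j + 1) x (yp j) else 0) - (if 0 < j then v i j x (yp j) else 0)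

/-- The LDG bilinear form `B(W; z)` for `W = (U,P,Q)` and `z = (v,s,r)`, where each
piecewise function is described by its restrictions to the mesh elements `K_{ij}`,
and derivatives are taken elementwise. -/
def Bform (ε lam1 lam2 : ℝ) (a b : ℝ → ℝ → ℝ) (N : ℕ) (xp yp : ℕ → ℝ)
    (U P Q v s r : ℕ → ℕ → ℝ → ℝ → ℝ) : ℝ :=
  ε⁻¹ * (ip2 N xp yp (fun i j x y => P i j x y * s i j x y)
       + ip2 N xp yp (fun i j x y => Q i j x y * r i j x y))
  + ip2 N xp yp (fun i j x y =>
      (b x y - deriv (fun x' => a x' y) x) * U i j x y * v i j x y)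
  + ip2 N xp yp (fun i j x y => U i j x y * deriv (fun x' => s i j x' y) x)
  + (∑ j ∈ Finset.Icc 1 N, ∑ i ∈ Finset.Icc 1 (N - 1),
      ∫ y in yp (j - 1)..yp j, U i j (xp i) y * (s (i + 1) j (xp i) y - s i j (xp i) y))
  + ip2 N xp yp (fun i j x y => U i j x y * deriv (fun y' => r i j x y') y)
  + (∑ i ∈ Finset.Icc 1 N, ∑ j ∈ Finset.Icc 1 (N - 1),
      ∫ x in xp (i - 1)..xp i, U i j x (yp j) * (r i (j + 1) x (yp j) - r i j x (yp j)))
  + ip2 N xp yp (fun i j x y => P i j x y * deriv (fun x' => v i j x' y) x)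
  + (∑ j ∈ Finset.Icc 1 N,
      ((∑ i ∈ Finset.range N,
          ∫ y in yp (j - 1)..yp j, P (i + 1) j (xp i) y * jmpX N xp v i j y)
        - ∫ y in yp (j - 1)..yp j, P N j (xp N) y * v N j (xp N) y))
  + ip2 N xp yp (fun i j x y => Q i j x y * deriv (fun y' => v i j x y') y)
  + (∑ i ∈ Finset.Icc 1 N,
      ((∑ j ∈ Finset.range N,
          ∫ x in xp (i - 1)..xp i, Q i (j + 1) x (yp j) * jmpY N yp v i j x)
        - ∫ x in xp (i - 1)..xp i, Q i N x (yp N) * v i N x (yp N)))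
  - ip2 N xp yp (fun i j x y => a x y * U i j x y * deriv (fun x' => v i j x' y) x)
  - (∑ j ∈ Finset.Icc 1 N, ∑ i ∈ Finset.Icc 1 N,
      ∫ y in yp (j - 1)..yp j, a (xp i) y * U i j (xp i) y * jmpX N xp v i j y)
  + (∑ j ∈ Finset.Icc 1 N,
      lam1 * ∫ y in yp (j - 1)..yp j, U N j (xp N) y * v N j (xp N) y)
  + (∑ i ∈ Finset.Icc 1 N,
      lam2 * ∫ x in xp (i - 1)..xp i, U i N x (yp N) * v i N x (yp N))

/-- The square `|||z|||²` of the LDG energy norm of a triple `z = (v,s,r)` of piecewise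
functions, computed with elementwise traces and the boundary conventions of the paper. -/
def enormSq (ε lam1 lam2 : ℝ) (a b : ℝ → ℝ → ℝ) (N : ℕ) (xp yp : ℕ → ℝ)
    (v s r : ℕ → ℕ → ℝ → ℝ → ℝ) : ℝ :=
  ε⁻¹ * ip2 N xp yp (fun i j x y => (s i j x y) ^ 2)
  + ε⁻¹ * ip2 N xp yp (fun i j x y => (r i j x y) ^ 2)
  + ip2 N xp yp (fun i j x y =>
      (b x y - deriv (fun x' => a x' y) x / 2) * (v i j x y) ^ 2)
  + (∑ j ∈ Finset.Icc 1 N, ∑ i ∈ Finset.range (N + 1),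
      (1 / 2) * ∫ y in yp (j - 1)..yp j, a (xp i) y * (jmpX N xp v i j y) ^ 2)
  + (∑ j ∈ Finset.Icc 1 N, lam1 * ∫ y in yp (j - 1)..yp j, (jmpX N xp v N j y) ^ 2)
  + (∑ i ∈ Finset.Icc 1 N, lam2 * ∫ x in xp (i - 1)..xp i, (jmpY N yp v i N x) ^ 2)

/-- The local bilinear form `D¹_{ij}(η_u; s)`, where `η_u = u - Π⁻u` is described by the
family `P` of element Gauss–Radau projections (`η_u = u - P i j` on `K_{ij}`). -/
def D1form (xp yp : ℕ → ℝ) (u : ℝ → ℝ → ℝ) (P s : ℕ → ℕ → ℝ → ℝ → ℝ) (i j : ℕ) : ℝ :=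
  (∫ x in xp (i - 1)..xp i, ∫ y in yp (j - 1)..yp j,
      (u x y - P i j x y) * deriv (fun x' => s i j x' y) x)
  - (∫ y in yp (j - 1)..yp j, (u (xp i) y - P i j (xp i) y) * s i j (xp i) y)
  + (∫ y in yp (j - 1)..yp j,
      (if i = 1 then 0 else u (xp (i - 1)) y - P (i - 1) j (xp (i - 1)) y) * s i j (xp (i - 1)) y)

/-- The local bilinear form `D²_{ij}(η_u; s)`. -/
def D2form (xp yp : ℕ → ℝ) (u : ℝ → ℝ → ℝ) (P s : ℕ → ℕ → ℝ → ℝ → ℝ) (i j : ℕ) : ℝ :=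
  (∫ x in xp (i - 1)..xp i, ∫ y in yp (j - 1)..yp j,
      (u x y - P i j x y) * deriv (fun y' => s i j x y') y)
  - (∫ x in xp (i - 1)..xp i, (u x (yp j) - P i j x (yp j)) * s i j x (yp j))
  + (∫ x in xp (i - 1)..xp i,
      (if j = 1 then 0 else u x (yp (j - 1)) - P i (j - 1) x (yp (j - 1))) * s i j x (yp (j - 1)))

/-!
On the coefficient matrix `c` of `P`, the `(k+1)²` conditions defining `Π⁻` are the tensor
products of the one-dimensional Radau functionals `f ↦ ∫ f xⁱ` (`i < k`) and `f ↦ f(a₂)`, so they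
read `A c Bᵀ = (moments of z)`, where `A` and `B` are the matrices of the Radau functionals on the
monomials in `x` and in `y`. Each of `A`, `B` is invertible: if a polynomial `f` of degree `≤ k`
is annihilated by the functionals on `[a, b]`, then `f = (x - b) g` with `deg g < k`, hence
`0 = ∫ f g = ∫ (x - b) g²`, which forces `g = 0`. Therefore `c ↦ A c Bᵀ` is bijective.
Since `z` is only continuous on the closed rectangle, it is first replaced by its composition with
the projection onto the rectangle; this changes none of the conditions.
-/

namespace GaussRadau

open Polynomial Set Function
open scoped Interval Matrix

variable {k m n : ℕ} {a b a₁ a₂ b₁ b₂ : ℝ}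

theorem integral_sum_const_mul {ι : Type*} (s : Finset ι) (c : ι → ℝ) {g : ι → ℝ → ℝ}
    (hg : ∀ i ∈ s, IntervalIntegrable (g i) volume a b) :
    ∫ x in a..b, ∑ i ∈ s, c i * g i x = ∑ i ∈ s, c i * ∫ x in a..b, g i x := by
  rw [intervalIntegral.integral_finsetSum fun i hi => (hg i hi).const_mul (c i)]
  simp only [intervalIntegral.integral_const_mul]

theorem integral_integral_sum_const_mul {ι : Type*} (s : Finset ι) (c : ι → ℝ)
    {F : ι → ℝ → ℝ → ℝ} (hF : ∀ i ∈ s, Continuous (uncurry (F i))) :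
    ∫ x in a₁..a₂, ∫ y in b₁..b₂, ∑ i ∈ s, c i * F i x y
      = ∑ i ∈ s, c i * ∫ x in a₁..a₂, ∫ y in b₁..b₂, F i x y := by
  have hinner : ∀ x, ∫ y in b₁..b₂, ∑ i ∈ s, c i * F i x y
      = ∑ i ∈ s, c i * ∫ y in b₁..b₂, F i x y := fun x =>
    integral_sum_const_mul s c fun i hi => ((hF i hi).uncurry_left x).intervalIntegrable _ _
  simp only [hinner]
  exact integral_sum_const_mul s c fun i hi =>
    (intervalIntegral.continuous_parametric_intervalIntegral_of_continuous' (hF i hi) _ _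
      ).intervalIntegrable _ _

theorem integral_weight_mul_sq_pos (hab : a < b) {w : ℝ → ℝ} (hw : Continuous w)
    (hw_pos : ∀ x ∈ Ioo a b, 0 < w x) {G : ℝ[X]} (hG : G ≠ 0) :
    0 < ∫ x in a..b, w x * G.eval x ^ 2 := by
  have hint : IntervalIntegrable (fun x => w x * G.eval x ^ 2) volume a b :=
    (hw.mul (G.continuous.pow 2)).intervalIntegrable a b
  have hnonneg : 0 ≤ᵐ[volume.restrict (Ι a b)] fun x => w x * G.eval x ^ 2 := by
    rw [uIoc_of_le hab.le]
    refine ae_restrict_of_ae_eq_of_ae_restrict Ioo_ae_eq_Ioc ?_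
    refine (ae_restrict_iff' measurableSet_Ioo).2 (Filter.Eventually.of_forall fun x hx => ?_)
    exact mul_nonneg (hw_pos x hx).le (sq_nonneg _)
  rw [intervalIntegral.integral_pos_iff_support_of_nonneg_ae' hnonneg hint]
  refine ⟨hab, ?_⟩
  calc (0 : ENNReal) < volume (Ioo a b) := Measure.measure_Ioo_pos _ |>.2 hab
    _ = volume (Ioo a b \ {x | G.IsRoot x}) :=
      (measure_sdiff_null ((finite_setOfPred_isRoot hG).measure_zero _)).symm
    _ ≤ volume (support (fun x => w x * G.eval x ^ 2) ∩ Ioc a b) := by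
      refine measure_mono fun x ⟨hx, hroot⟩ => ⟨?_, Ioo_subset_Ioc_self hx⟩
      exact (mul_pos (hw_pos x hx) (sq_pos_of_ne_zero hroot)).ne'

theorem eq_zero_of_forall_integral_mul_pow_eq_zero_of_isRoot (hab : a < b) {F : ℝ[X]}
    (hF : F ∈ degreeLT ℝ (k + 1)) (horth : ∀ i < k, ∫ x in a..b, F.eval x * x ^ i = 0)
    (hroot : F.IsRoot b) : F = 0 := by
  by_contra hF0
  set G := F /ₘ (X - C b)
  have hfac : (X - C b) * G = F := mul_divByMonic_eq_iff_isRoot.2 hroot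
  have hG0 : G ≠ 0 := by
    rintro hG
    rw [hG, mul_zero] at hfac
    exact hF0 hfac.symm
  have hG : G ∈ degreeLT ℝ k := by
    rw [mem_degreeLT, ← natDegree_lt_iff_degree_lt hG0]
    rw [mem_degreeLT, ← natDegree_lt_iff_degree_lt hF0, ← hfac,
      natDegree_mul (X_sub_C_ne_zero b) hG0, natDegree_X_sub_C] at hF
    omega
  have horthG : ∫ x in a..b, F.eval x * G.eval x = 0 := by
    simp_rw [eval_eq_sum_degreeLTEquiv hG, Finset.mul_sum, mul_left_comm (F.eval _)]
    rw [integral_sum_const_mul (g := fun (i : Fin k) x => F.eval x * x ^ (i : ℕ)) _ _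
      fun i _ => (F.continuous.mul (continuous_pow _)).intervalIntegrable a b]
    exact Finset.sum_eq_zero fun i _ => by rw [horth i i.2, mul_zero]
  have hpos := integral_weight_mul_sq_pos hab (w := fun x => b - x) (by fun_prop)
    (fun x hx => sub_pos.2 hx.2) hG0
  have hneg : ∀ x, (b - x) * G.eval x ^ 2 = -(F.eval x * G.eval x) := fun x => by
    rw [← hfac, eval_mul, eval_sub, eval_X, eval_C]
    ring
  refine hpos.ne' ?_
  simp only [hneg, intervalIntegral.integral_neg, horthG, neg_zero]

def radauFunctional (k : ℕ) (a b : ℝ) (f : ℝ → ℝ) (i : Fin (k + 1)) : ℝ :=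
  if (i : ℕ) < k then ∫ x in a..b, f x * x ^ (i : ℕ) else f b

def radauMatrix (k : ℕ) (a b : ℝ) : Matrix (Fin (k + 1)) (Fin (k + 1)) ℝ :=
  Matrix.of fun i j => radauFunctional k a b (· ^ (j : ℕ)) i

@[simp]
theorem radauFunctional_castSucc (f : ℝ → ℝ) (i : Fin k) :
    radauFunctional k a b f i.castSucc = ∫ x in a..b, f x * x ^ (i : ℕ) := by
  simp [radauFunctional]

@[simp]
theorem radauFunctional_last (f : ℝ → ℝ) : radauFunctional k a b f (Fin.last k) = f b := by
  simp [radauFunctional]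

theorem radauFunctional_sum_mul {ι : Type*} (s : Finset ι) (c : ι → ℝ) {g : ι → ℝ → ℝ}
    (hg : ∀ j ∈ s, Continuous (g j)) (i : Fin (k + 1)) :
    radauFunctional k a b (fun x => ∑ j ∈ s, c j * g j x) i
      = ∑ j ∈ s, c j * radauFunctional k a b (g j) i := by
  unfold radauFunctional
  split_ifs
  · simp only [Finset.sum_mul, mul_assoc]
    exact integral_sum_const_mul s c fun j hj =>
      ((hg j hj).mul (continuous_pow _)).intervalIntegrable a b
  · rfl

theorem radauMatrix_mulVec (c : Fin (k + 1) → ℝ) (i : Fin (k + 1)) :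
    (radauMatrix k a b *ᵥ c) i = radauFunctional k a b (fun x => ∑ j, c j * x ^ (j : ℕ)) i := by
  rw [radauFunctional_sum_mul _ _ fun j _ => continuous_pow _]
  simp only [Matrix.mulVec, dotProduct, radauMatrix, Matrix.of_apply, mul_comm]

theorem isUnit_radauMatrix (hab : a < b) : IsUnit (radauMatrix k a b) := by
  rw [← Matrix.mulVec_injective_iff_isUnit]
  intro c d hcd
  rw [← sub_eq_zero, ← Matrix.mulVec_sub] at hcd
  rw [← sub_eq_zero]
  generalize c - d = e at hcd ⊢
  set F := (degreeLTEquiv ℝ (k + 1)).symm e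
  have hF : ∀ x, (F : ℝ[X]).eval x = ∑ j, e j * x ^ (j : ℕ) := fun x => by
    simp [eval_eq_sum_degreeLTEquiv F.2, F]
  have hmom : ∀ i, radauFunctional k a b (F : ℝ[X]).eval i = 0 := fun i => by
    simp only [hF, ← radauMatrix_mulVec, hcd, Pi.zero_apply]
  have hF0 : (F : ℝ[X]) = 0 := by
    refine eq_zero_of_forall_integral_mul_pow_eq_zero_of_isRoot hab F.2 (fun i hi => ?_) ?_
    · simpa only [radauFunctional_castSucc] using hmom (Fin.castSucc ⟨i, hi⟩)
    · simpa only [IsRoot.def, radauFunctional_last] using hmom (Fin.last k)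
  simpa [F] using hF0

def bipoly (c : Matrix (Fin m) (Fin n) ℝ) (x y : ℝ) : ℝ :=
  ∑ p, ∑ q, c p q * x ^ (p : ℕ) * y ^ (q : ℕ)

theorem continuous_bipoly (c : Matrix (Fin m) (Fin n) ℝ) : Continuous (uncurry (bipoly c)) := by
  unfold bipoly uncurry
  fun_prop

theorem poly2_iff {P : ℝ → ℝ → ℝ} :
    Poly2 m n P ↔ ∃ c : Matrix (Fin (m + 1)) (Fin (n + 1)) ℝ, P = bipoly c := by
  simp only [Poly2, funext_iff, bipoly]
  rfl

theorem poly1_pow {i : ℕ} (hi : i ≤ m) : Poly1 m (· ^ i) :=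
  ⟨fun j => if j = ⟨i, by omega⟩ then 1 else 0, fun x => by simp [ite_mul]⟩

theorem poly2_pow_mul_pow {p q : ℕ} (hp : p ≤ m) (hq : q ≤ n) :
    Poly2 m n (fun x y => x ^ p * y ^ q) := by
  obtain ⟨c, hc⟩ := poly1_pow hp
  obtain ⟨d, hd⟩ := poly1_pow hq
  refine ⟨fun i j => c i * d j, fun x y => ?_⟩
  simp only [hc x, hd y, Finset.sum_mul, Finset.mul_sum]
  rw [Finset.sum_comm]
  exact Finset.sum_congr rfl fun _ _ => Finset.sum_congr rfl fun _ _ => by ring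

theorem forall_poly1_integral_eq_iff {f g : ℝ → ℝ} (hf : Continuous f) (hg : Continuous g) :
    (∀ v, Poly1 m v → ∫ x in a..b, f x * v x = ∫ x in a..b, g x * v x) ↔
      ∀ i ≤ m, ∫ x in a..b, f x * x ^ i = ∫ x in a..b, g x * x ^ i := by
  have hexpand : ∀ {h : ℝ → ℝ}, Continuous h → ∀ d : Fin (m + 1) → ℝ,
      ∫ x in a..b, h x * ∑ i, d i * x ^ (i : ℕ) = ∑ i, d i * ∫ x in a..b, h x * x ^ (i : ℕ) :=
    fun hh d => by
      simp only [Finset.mul_sum, mul_left_comm (_ : ℝ) (d _)]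
      exact integral_sum_const_mul _ _ fun i _ =>
        (hh.mul (continuous_pow _)).intervalIntegrable a b
  refine ⟨fun h i hi => h _ (poly1_pow hi), ?_⟩
  rintro h v ⟨d, hd⟩
  simp only [hd, hexpand hf, hexpand hg]
  exact Finset.sum_congr rfl fun i _ => by rw [h i (by omega)]

theorem forall_poly2_integral_integral_eq_iff {f g : ℝ → ℝ → ℝ} (hf : Continuous (uncurry f))
    (hg : Continuous (uncurry g)) :
    (∀ v, Poly2 m n v → ∫ x in a₁..a₂, ∫ y in b₁..b₂, f x y * v x y
        = ∫ x in a₁..a₂, ∫ y in b₁..b₂, g x y * v x y) ↔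
      ∀ p ≤ m, ∀ q ≤ n, ∫ x in a₁..a₂, ∫ y in b₁..b₂, f x y * (x ^ p * y ^ q)
        = ∫ x in a₁..a₂, ∫ y in b₁..b₂, g x y * (x ^ p * y ^ q) := by
  have hexpand : ∀ {h : ℝ → ℝ → ℝ}, Continuous (uncurry h) →
      ∀ d : Matrix (Fin (m + 1)) (Fin (n + 1)) ℝ,
      ∫ x in a₁..a₂, ∫ y in b₁..b₂, h x y * bipoly d x y
        = ∑ pq : Fin (m + 1) × Fin (n + 1), d pq.1 pq.2 *
            ∫ x in a₁..a₂, ∫ y in b₁..b₂, h x y * (x ^ (pq.1 : ℕ) * y ^ (pq.2 : ℕ)) := by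
    intro h hh d
    have hsum : ∀ x y, h x y * bipoly d x y = ∑ pq : Fin (m + 1) × Fin (n + 1),
        d pq.1 pq.2 * (h x y * (x ^ (pq.1 : ℕ) * y ^ (pq.2 : ℕ))) := fun x y => by
      simp only [bipoly, Fintype.sum_prod_type, Finset.mul_sum]
      exact Finset.sum_congr rfl fun _ _ => Finset.sum_congr rfl fun _ _ => by ring
    simp only [hsum]
    exact integral_integral_sum_const_mul _ _ fun pq _ =>
      hh.mul ((continuous_fst.pow _).mul (continuous_snd.pow _))
  refine ⟨fun h p hp q hq => h _ (poly2_pow_mul_pow hp hq), ?_⟩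
  intro h v hv
  obtain ⟨d, rfl⟩ := poly2_iff.1 hv
  rw [hexpand hf, hexpand hg]
  exact Finset.sum_congr rfl fun pq _ => by rw [h pq.1 (by omega) pq.2 (by omega)]

def radauMoments (k : ℕ) (a₁ a₂ b₁ b₂ : ℝ) (f : ℝ → ℝ → ℝ) :
    Matrix (Fin (k + 1)) (Fin (k + 1)) ℝ :=
  Matrix.of fun p q => radauFunctional k a₁ a₂ (fun x => radauFunctional k b₁ b₂ (f x) q) p

theorem radauMoments_bipoly (c : Matrix (Fin (k + 1)) (Fin (k + 1)) ℝ) :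
    radauMoments k a₁ a₂ b₁ b₂ (bipoly c)
      = radauMatrix k a₁ a₂ * c * (radauMatrix k b₁ b₂)ᵀ := by
  have hy : ∀ x q, radauFunctional k b₁ b₂ (bipoly c x) q
      = ∑ p', (∑ q', c p' q' * radauMatrix k b₁ b₂ q q') * x ^ (p' : ℕ) := fun x q => by
    have : bipoly c x = fun y => ∑ q', (∑ p', c p' q' * x ^ (p' : ℕ)) * y ^ (q' : ℕ) := by
      ext y
      simp only [bipoly, Finset.sum_mul]
      exact Finset.sum_comm
    rw [this, radauFunctional_sum_mul _ _ fun _ _ => continuous_pow _]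
    simp only [radauMatrix, Matrix.of_apply, Finset.sum_mul]
    rw [Finset.sum_comm]
    exact Finset.sum_congr rfl fun _ _ => Finset.sum_congr rfl fun _ _ => by ring
  ext p q
  simp only [radauMoments, Matrix.of_apply, hy]
  rw [radauFunctional_sum_mul _ _ fun _ _ => continuous_pow _]
  simp only [Matrix.mul_apply, Matrix.transpose_apply, radauMatrix, Matrix.of_apply,
    Finset.sum_mul]
  rw [Finset.sum_comm]
  exact Finset.sum_congr rfl fun _ _ => Finset.sum_congr rfl fun _ _ => by ring

theorem radauMoments_castSucc_castSucc (f : ℝ → ℝ → ℝ) (p q : Fin k) :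
    radauMoments k a₁ a₂ b₁ b₂ f p.castSucc q.castSucc
      = ∫ x in a₁..a₂, ∫ y in b₁..b₂, f x y * (x ^ (p : ℕ) * y ^ (q : ℕ)) := by
  simp only [radauMoments, Matrix.of_apply, radauFunctional_castSucc]
  refine intervalIntegral.integral_congr fun x _ => ?_
  rw [← intervalIntegral.integral_mul_const]
  exact intervalIntegral.integral_congr fun y _ => by ring

theorem radauMoments_eq_iff (hk : 1 ≤ k) {P z : ℝ → ℝ → ℝ} (hP : Continuous (uncurry P))
    (hz : Continuous (uncurry z)) :
    radauMoments k a₁ a₂ b₁ b₂ P = radauMoments k a₁ a₂ b₁ b₂ z ↔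
      (∀ v : ℝ → ℝ → ℝ, Poly2 (k - 1) (k - 1) v →
        (∫ x in a₁..a₂, ∫ y in b₁..b₂, P x y * v x y) =
          ∫ x in a₁..a₂, ∫ y in b₁..b₂, z x y * v x y) ∧
      (∀ v : ℝ → ℝ, Poly1 (k - 1) v →
        (∫ y in b₁..b₂, P a₂ y * v y) = ∫ y in b₁..b₂, z a₂ y * v y) ∧
      (∀ v : ℝ → ℝ, Poly1 (k - 1) v →
        (∫ x in a₁..a₂, P x b₂ * v x) = ∫ x in a₁..a₂, z x b₂ * v x) ∧
      P a₂ b₂ = z a₂ b₂ := by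
  rw [forall_poly2_integral_integral_eq_iff hP hz,
    forall_poly1_integral_eq_iff (hP.uncurry_left a₂) (hz.uncurry_left a₂),
    forall_poly1_integral_eq_iff (hP.uncurry_right b₂) (hz.uncurry_right b₂), ← Matrix.ext_iff]
  constructor
  · intro h
    refine ⟨fun p hp q hq => ?_, fun q hq => ?_, fun p hp => ?_, ?_⟩
    · simpa [radauMoments_castSucc_castSucc] using
        h (Fin.castSucc ⟨p, by omega⟩) (Fin.castSucc ⟨q, by omega⟩)
    · simpa [radauMoments] using h (Fin.last k) (Fin.castSucc ⟨q, by omega⟩)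
    · simpa [radauMoments] using h (Fin.castSucc ⟨p, by omega⟩) (Fin.last k)
    · simpa [radauMoments] using h (Fin.last k) (Fin.last k)
  · rintro ⟨h₁, h₂, h₃, h₄⟩ p q
    induction p using Fin.lastCases <;> induction q using Fin.lastCases
    · simpa [radauMoments] using h₄
    · simpa [radauMoments] using h₂ _ (by omega)
    · simpa [radauMoments] using h₃ _ (by omega)
    · simpa [radauMoments_castSucc_castSucc] using h₁ _ (by omega) _ (by omega)

theorem GRm_iff (hk : 1 ≤ k) {z P : ℝ → ℝ → ℝ} (hz : Continuous (uncurry z)) :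
    GRm k a₁ a₂ b₁ b₂ z P ↔ ∃ c, P = bipoly c ∧
      radauMatrix k a₁ a₂ * c * (radauMatrix k b₁ b₂)ᵀ = radauMoments k a₁ a₂ b₁ b₂ z := by
  rw [GRm, poly2_iff]
  constructor
  · rintro ⟨⟨c, rfl⟩, h⟩
    refine ⟨c, rfl, ?_⟩
    rw [← radauMoments_bipoly]
    exact (radauMoments_eq_iff hk (continuous_bipoly c) hz).2 h
  · rintro ⟨c, rfl, h⟩
    rw [← radauMoments_bipoly] at h
    exact ⟨⟨c, rfl⟩, (radauMoments_eq_iff hk (continuous_bipoly c) hz).1 h⟩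

theorem GRm_congr (ha : a₁ ≤ a₂) (hb : b₁ ≤ b₂) {z z' P : ℝ → ℝ → ℝ}
    (h : ∀ x ∈ Icc a₁ a₂, ∀ y ∈ Icc b₁ b₂, z x y = z' x y) :
    GRm k a₁ a₂ b₁ b₂ z P ↔ GRm k a₁ a₂ b₁ b₂ z' P := by
  have h₁ : ∀ v : ℝ → ℝ → ℝ, ∫ x in a₁..a₂, ∫ y in b₁..b₂, z x y * v x y
      = ∫ x in a₁..a₂, ∫ y in b₁..b₂, z' x y * v x y := fun v =>
    intervalIntegral.integral_congr fun x hx => intervalIntegral.integral_congr fun y hy => by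
      rw [uIcc_of_le ha] at hx
      rw [uIcc_of_le hb] at hy
      rw [h x hx y hy]
  have h₂ : ∀ v : ℝ → ℝ, ∫ y in b₁..b₂, z a₂ y * v y = ∫ y in b₁..b₂, z' a₂ y * v y := fun v =>
    intervalIntegral.integral_congr fun y hy => by
      rw [uIcc_of_le hb] at hy
      rw [h a₂ (right_mem_Icc.2 ha) y hy]
  have h₃ : ∀ v : ℝ → ℝ, ∫ x in a₁..a₂, z x b₂ * v x = ∫ x in a₁..a₂, z' x b₂ * v x := fun v =>
    intervalIntegral.integral_congr fun x hx => by
      rw [uIcc_of_le ha] at hx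
      rw [h x hx b₂ (right_mem_Icc.2 hb)]
  simp only [GRm, h₁, h₂, h₃, h a₂ (right_mem_Icc.2 ha) b₂ (right_mem_Icc.2 hb)]

theorem exists_continuous_eq_on_Icc_prod (ha : a₁ ≤ a₂) (hb : b₁ ≤ b₂) {z : ℝ → ℝ → ℝ}
    (hz : ContinuousOn (fun p : ℝ × ℝ => z p.1 p.2) (Icc a₁ a₂ ×ˢ Icc b₁ b₂)) :
    ∃ z' : ℝ → ℝ → ℝ, Continuous (uncurry z') ∧
      ∀ x ∈ Icc a₁ a₂, ∀ y ∈ Icc b₁ b₂, z x y = z' x y := by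
  refine ⟨fun x y => z (projIcc a₁ a₂ ha x) (projIcc b₁ b₂ hb y), ?_, fun x hx y hy => ?_⟩
  · exact hz.comp_continuous
      (f := fun p : ℝ × ℝ => ((projIcc a₁ a₂ ha p.1 : ℝ), (projIcc b₁ b₂ hb p.2 : ℝ)))
      (by fun_prop) fun p => ⟨(projIcc a₁ a₂ ha p.1).2, (projIcc b₁ b₂ hb p.2).2⟩
  · simp [projIcc_of_mem _ hx, projIcc_of_mem _ hy]

theorem existsUnique_mul_mul_eq {M : Type*} [Monoid M] {a b : M} (ha : IsUnit a)
    (hb : IsUnit b) (t : M) : ∃! c, a * c * b = t := by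
  obtain ⟨u, rfl⟩ := ha
  obtain ⟨v, rfl⟩ := hb
  refine ⟨↑u⁻¹ * t * ↑v⁻¹, by simp [mul_assoc], fun c hc => ?_⟩
  rw [← hc]
  simp [mul_assoc]

end GaussRadau

open GaussRadau

/-- Well-definedness of the two-dimensional local Gauss–Radau projection `Π⁻`:
on a rectangle `(a₁,a₂) × (b₁,b₂)`, every continuous function `z` has a unique
Gauss–Radau projection of degree at most `k` in each variable. -/
theorem GRminus_existsUnique (k : ℕ) (hk : 1 ≤ k) (a₁ a₂ b₁ b₂ : ℝ)
    (ha : a₁ < a₂) (hb : b₁ < b₂) (z : ℝ → ℝ → ℝ)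
    (hz : ContinuousOn (fun p : ℝ × ℝ => z p.1 p.2) (Set.Icc a₁ a₂ ×ˢ Set.Icc b₁ b₂)) :
    ∃! P : ℝ → ℝ → ℝ, GRm k a₁ a₂ b₁ b₂ z P := by
  obtain ⟨z', hz', hzz'⟩ := exists_continuous_eq_on_Icc_prod ha.le hb.le hz
  simp_rw [GRm_congr ha.le hb.le hzz', GRm_iff hk hz']
  obtain ⟨c, hc, hc_unique⟩ := existsUnique_mul_mul_eq (isUnit_radauMatrix (k := k) ha)
    ((Matrix.isUnit_transpose _).2 (isUnit_radauMatrix hb)) (radauMoments k a₁ a₂ b₁ b₂ z')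
  exact ⟨bipoly c, ⟨c, rfl, hc⟩,
    fun P ⟨d, hP, hd⟩ => hP.trans (congrArg bipoly (hc_unique d hd))⟩
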